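/- arXiv:2105.04634 — 3 statements merged into one kernel-verified Lean document; each statement's English description precedes it below -/
import Mathlib

section
/- Let f ∈ L²(ℝ) be supported in [-l, l], and suppose its Hilbert transform Hf vanishes almost everywhere on {x : |x| > l} and satisfies |Hf(x)| = |f(x)| for almost every x ∈ (-l, l). Then ∫_{-l}^{l} f(s) sʲ ds = 0 for all j ≥ 0 and hence f = 0 almost everywhere. -/
open MeasureTheory

/-- If `g` is integrable on `(-l,l)` and `∫ g(s)/(x-s) ds = 0` for all `x > l`,
then `∫ g = 0` (multiply by `x` and let `x → ∞`). -/
lemma lim_aux {l : ℝ} (hl : 0 < l) (g : ℝ → ℂ)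
    (hg : Integrable g (volume.restrict (Set.Ioo (-l) l)))
    (h : ∀ x : ℝ, l < x → ∫ s in Set.Ioo (-l) l, g s / ((x : ℂ) - (s : ℂ)) = 0) :
    ∫ s in Set.Ioo (-l) l, g s = 0 := by
  set μ := volume.restrict (Set.Ioo (-l) l) with hμ
  set x : ℕ → ℝ := fun n => l + 1 + n with hxdef
  have hxl : ∀ n : ℕ, l < x n := by
    intro n
    have : (0:ℝ) ≤ n := Nat.cast_nonneg n
    simp only [hxdef]; linarith
  set F : ℕ → ℝ → ℂ := fun n s => g s * ((x n : ℂ) / ((x n : ℂ) - (s : ℂ))) with hFdef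
  have hnorm_sub : ∀ (n : ℕ) (s : ℝ), ‖(x n : ℂ) - (s : ℂ)‖ = |x n - s| := by
    intro n s
    rw [show (x n : ℂ) - (s : ℂ) = ((x n - s : ℝ) : ℂ) by push_cast; ring,
      Complex.norm_real, Real.norm_eq_abs]
  have hden : ∀ (n : ℕ) (s : ℝ), s ∈ Set.Ioo (-l) l → (n : ℝ) + 1 ≤ |x n - s| := by
    intro n s hs
    have h1 : s < l := hs.2
    have : (n : ℝ) + 1 ≤ x n - s := by simp only [hxdef]; linarith
    exact this.trans (le_abs_self _)
  -- integrals of F n are zero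
  have hFint : ∀ n : ℕ, ∫ s, F n s ∂μ = 0 := by
    intro n
    have : ∀ s : ℝ, F n s = (x n : ℂ) * (g s / ((x n : ℂ) - (s : ℂ))) := by
      intro s; simp only [hFdef]; ring
    simp_rw [this]
    rw [integral_const_mul, h (x n) (hxl n), mul_zero]
  -- dominated convergence
  have key : Filter.Tendsto (fun n => ∫ s, F n s ∂μ) Filter.atTop (nhds (∫ s, g s ∂μ)) := by
    apply tendsto_integral_of_dominated_convergence (fun s => (l + 1) * ‖g s‖)
    · intro n
      apply hg.1.mul
      apply Measurable.aestronglyMeasurable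
      exact measurable_const.div (measurable_const.sub Complex.measurable_ofReal)
    · exact hg.norm.const_mul _
    · intro n
      filter_upwards [ae_restrict_mem measurableSet_Ioo] with s hs
      have hd := hden n s hs
      have hd0 : (0:ℝ) < (n:ℝ) + 1 := by positivity
      have habs : (0:ℝ) < |x n - s| := lt_of_lt_of_le hd0 hd
      have hb : ‖(x n : ℂ) / ((x n : ℂ) - (s : ℂ))‖ ≤ l + 1 := by
        rw [norm_div, hnorm_sub n s, Complex.norm_real, Real.norm_eq_abs,
          abs_of_pos (lt_trans hl (hxl n))]
        rw [div_le_iff₀ habs]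
        have hx1 : x n ≤ (l + 1) * ((n:ℝ) + 1) := by
          have : (0:ℝ) ≤ n := Nat.cast_nonneg n
          simp only [hxdef]; nlinarith
        calc x n ≤ (l + 1) * ((n:ℝ) + 1) := hx1
          _ ≤ (l + 1) * |x n - s| := by
              apply mul_le_mul_of_nonneg_left hd (by linarith)
      calc ‖F n s‖ = ‖g s‖ * ‖(x n : ℂ) / ((x n : ℂ) - (s : ℂ))‖ := norm_mul _ _
        _ ≤ ‖g s‖ * (l + 1) := mul_le_mul_of_nonneg_left hb (norm_nonneg _)
        _ = (l + 1) * ‖g s‖ := mul_comm _ _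
    · filter_upwards [ae_restrict_mem measurableSet_Ioo] with s hs
      rw [tendsto_iff_norm_sub_tendsto_zero]
      apply squeeze_zero (fun n => norm_nonneg _) (g := fun n : ℕ => (‖g s‖ * l) * (1 / ((n:ℝ) + 1)))
      · intro n
        have hd := hden n s hs
        have hd0 : (0:ℝ) < (n:ℝ) + 1 := by positivity
        have habs : (0:ℝ) < |x n - s| := lt_of_lt_of_le hd0 hd
        have hne : (x n : ℂ) - (s : ℂ) ≠ 0 := by
          intro hcon
          have : ‖(x n : ℂ) - (s : ℂ)‖ = 0 := by rw [hcon, norm_zero]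
          rw [hnorm_sub n s] at this
          exact absurd this (ne_of_gt habs)
        have heq : F n s - g s = g s * ((s : ℂ) / ((x n : ℂ) - (s : ℂ))) := by
          simp only [hFdef]
          field_simp
          ring
        rw [heq, norm_mul, norm_div, hnorm_sub n s, Complex.norm_real, Real.norm_eq_abs]
        have hsl : |s| ≤ l := le_of_lt (abs_lt.mpr ⟨hs.1, hs.2⟩)
        calc ‖g s‖ * (|s| / |x n - s|) ≤ ‖g s‖ * (l / ((n:ℝ) + 1)) := by
              apply mul_le_mul_of_nonneg_left _ (norm_nonneg _)
              apply div_le_div₀ hl.le hsl hd0 hd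
          _ = (‖g s‖ * l) * (1 / ((n:ℝ) + 1)) := by ring
      · have : Filter.Tendsto (fun n : ℕ => 1 / ((n:ℝ) + 1)) Filter.atTop (nhds 0) :=
          tendsto_one_div_add_atTop_nhds_zero_nat
        simpa using this.const_mul (‖g s‖ * l)
  have h0 : Filter.Tendsto (fun _ : ℕ => (0:ℂ)) Filter.atTop (nhds (∫ s, g s ∂μ)) :=
    key.congr fun n => hFint n
  exact tendsto_nhds_unique h0 tendsto_const_nhds

/-- Let `f ∈ L²(ℝ)` be supported in `[-l, l]`, and suppose its Hilbert transform `Hf`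
(given outside the interval by the non-singular formula
`Hf(x) = (1/π) ∫_{-l}^{l} f(s)/(x - s) ds`) vanishes for `|x| > l` and satisfies
`|Hf(x)| = |f(x)|` a.e. on `(-l, l)`. Then all moments of `f` vanish and `f = 0` a.e. -/
theorem stmt_3 (l : ℝ) (hl : 0 < l) (f Hf : ℝ → ℂ)
    (hf : MemLp f 2 (volume : Measure ℝ))
    (hsupp : ∀ᵐ x ∂(volume : Measure ℝ), x ∉ Set.Icc (-l) l → f x = 0)
    (hHf : ∀ x : ℝ, l < |x| →
      Hf x = (1 / (Real.pi : ℂ)) * ∫ s in Set.Ioo (-l) l, f s / ((x : ℂ) - (s : ℂ)))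
    (hvanish : ∀ x : ℝ, l < |x| → Hf x = 0)
    (habs : ∀ᵐ x ∂(volume.restrict (Set.Ioo (-l) l)), ‖Hf x‖ = ‖f x‖) :
    (∀ j : ℕ, ∫ s in Set.Ioo (-l) l, f s * (s : ℂ) ^ j = 0) ∧
      f =ᵐ[(volume : Measure ℝ)] 0 := by
  set μ := volume.restrict (Set.Ioo (-l) l) with hμ
  haveI : IsFiniteMeasure μ := by
    refine ⟨?_⟩
    rw [hμ, Measure.restrict_apply_univ]
    exact measure_Ioo_lt_top
  have hfi : Integrable f μ := (hf.restrict _).integrable (by norm_num)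
  -- integrability of moments
  have hmom : ∀ j : ℕ, Integrable (fun s : ℝ => f s * (s : ℂ) ^ j) μ := by
    intro j
    have : Integrable (fun s : ℝ => (s : ℂ) ^ j * f s) μ := by
      apply hfi.bdd_mul (c := l ^ j)
      · exact (Complex.measurable_ofReal.pow_const j).aestronglyMeasurable
      · filter_upwards [ae_restrict_mem measurableSet_Ioo] with s hs
        rw [norm_pow, Complex.norm_real, Real.norm_eq_abs]
        exact pow_le_pow_left₀ (abs_nonneg _) (le_of_lt (abs_lt.mpr ⟨hs.1, hs.2⟩)) j
    exact this.congr (Filter.Eventually.of_forall fun s : ℝ => by ring)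
  -- integrability of the kernel-multiplied moments
  have hdiv : ∀ (j : ℕ) (x : ℝ), l < x →
      Integrable (fun s : ℝ => (f s * (s : ℂ) ^ j) / ((x : ℂ) - (s : ℂ))) μ := by
    intro j x hx
    have : Integrable (fun s : ℝ => ((x : ℂ) - (s : ℂ))⁻¹ * (f s * (s : ℂ) ^ j)) μ := by
      apply (hmom j).bdd_mul (c := (x - l)⁻¹)
      · exact ((measurable_const.sub Complex.measurable_ofReal).inv).aestronglyMeasurable
      · filter_upwards [ae_restrict_mem measurableSet_Ioo] with s hs
        rw [norm_inv]
        have h1 : (0:ℝ) < x - l := by linarith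
        have h2 : x - l ≤ ‖(x : ℂ) - (s : ℂ)‖ := by
          rw [show (x : ℂ) - (s : ℂ) = ((x - s : ℝ) : ℂ) by push_cast; ring,
            Complex.norm_real, Real.norm_eq_abs]
          have : x - l ≤ x - s := by linarith [hs.2]
          exact this.trans (le_abs_self _)
        exact inv_anti₀ h1 h2
    exact this.congr (Filter.Eventually.of_forall fun s : ℝ => by simp [div_eq_mul_inv]; ring)
  -- the basic vanishing for x > l
  have hE : ∀ x : ℝ, l < x → ∫ s in Set.Ioo (-l) l, f s / ((x : ℂ) - (s : ℂ)) = 0 := by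
    intro x hx
    have hx' : l < |x| := lt_of_lt_of_le hx (le_abs_self x)
    have h1 := hHf x hx'
    have h2 := hvanish x hx'
    rw [h2] at h1
    have hπ : (1 / (Real.pi : ℂ)) ≠ 0 := by
      apply one_div_ne_zero
      exact_mod_cast Real.pi_ne_zero
    rcases mul_eq_zero.mp h1.symm with h | h
    · exact absurd h hπ
    · exact h
  -- the key induction
  have Q : ∀ j : ℕ, ∀ x : ℝ, l < x →
      ∫ s in Set.Ioo (-l) l, (f s * (s : ℂ) ^ j) / ((x : ℂ) - (s : ℂ)) = 0 := by
    intro j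
    induction j with
    | zero =>
      intro x hx
      simpa using hE x hx
    | succ j ih =>
      -- first, the j-th moment vanishes
      have hMj : ∫ s in Set.Ioo (-l) l, f s * (s : ℂ) ^ j = 0 :=
        lim_aux hl _ (hmom j) ih
      intro x hx
      have hident : ∀ s ∈ Set.Ioo (-l) l,
          (f s * (s : ℂ) ^ (j+1)) / ((x : ℂ) - (s : ℂ))
            = (x : ℂ) * ((f s * (s : ℂ) ^ j) / ((x : ℂ) - (s : ℂ))) - f s * (s : ℂ) ^ j := by
        intro s hs
        have hne : (x : ℂ) - (s : ℂ) ≠ 0 := by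
          rw [show (x : ℂ) - (s : ℂ) = ((x - s : ℝ) : ℂ) by push_cast; ring]
          rw [Complex.ofReal_ne_zero]
          have : s < x := lt_trans hs.2 hx
          intro hcon; linarith [sub_eq_zero.mp hcon]
        field_simp
        ring
      rw [setIntegral_congr_fun measurableSet_Ioo hident]
      rw [integral_sub (((hdiv j x hx)).const_mul _) (hmom j)]
      rw [integral_const_mul, ih x hx, hMj, mul_zero, sub_zero]
  -- all moments vanish
  have hM : ∀ j : ℕ, ∫ s in Set.Ioo (-l) l, f s * (s : ℂ) ^ j = 0 := by
    intro j
    exact lim_aux hl _ (hmom j) (Q j)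
  refine ⟨hM, ?_⟩
  -- polynomials annihilate f
  have hpoly : ∀ p : Polynomial ℝ, ∫ s in Set.Ioo (-l) l, ((p.eval s : ℝ) : ℂ) * f s = 0 := by
    intro p
    have heq : ∀ s : ℝ, ((p.eval s : ℝ) : ℂ) * f s
        = ∑ i ∈ Finset.range (p.natDegree + 1), (p.coeff i : ℂ) * (f s * (s : ℂ) ^ i) := by
      intro s
      rw [Polynomial.eval_eq_sum_range]
      push_cast
      rw [Finset.sum_mul]
      exact Finset.sum_congr rfl fun i _ => by ring
    simp_rw [heq]
    rw [integral_finset_sum _ (fun i _ => (hmom i).const_mul _)]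
    simp [integral_const_mul, hμ, hM]
  -- f annihilates all continuous test functions supported compactly (via Weierstrass)
  have hCi : ∫ s in Set.Ioo (-l) l, ‖f s‖ ≥ 0 := integral_nonneg fun _ => norm_nonneg _
  have htest : ∀ g : ℝ → ℝ, Continuous g → ∫ x in Set.Ioo (-l) l, ((g x : ℝ) : ℂ) * f x = 0 := by
    intro g hg
    set I := ∫ x in Set.Ioo (-l) l, ((g x : ℝ) : ℂ) * f x with hI
    have hnorm : ∀ ε : ℝ, 0 < ε → ‖I‖ ≤ ε := by
      intro ε hε
      set C := (∫ s in Set.Ioo (-l) l, ‖f s‖) + 1 with hC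
      have hC0 : 0 < C := by rw [hC]; linarith
      set δ := ε / C with hδ
      have hδ0 : 0 < δ := div_pos hε hC0
      obtain ⟨p, hp⟩ := exists_polynomial_near_of_continuousOn (-l) l g
        hg.continuousOn δ hδ0
      -- bound on p on Icc
      have hint_p : Integrable (fun x => ((p.eval x : ℝ) : ℂ) * f x) μ := by
        obtain ⟨B, hB⟩ := (isCompact_Icc (a := -l) (b := l)).exists_bound_of_continuousOn
          (Polynomial.continuous p).continuousOn
        apply hfi.bdd_mul (c := B)
        · exact (Complex.measurable_ofReal.comp (Polynomial.continuous p).measurable).aestronglyMeasurable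
        · filter_upwards [ae_restrict_mem measurableSet_Ioo] with s hs
          rw [Complex.norm_real]
          exact hB s (Set.Ioo_subset_Icc_self hs)
      have hint_g : Integrable (fun x => ((g x : ℝ) : ℂ) * f x) μ := by
        obtain ⟨B, hB⟩ := (isCompact_Icc (a := -l) (b := l)).exists_bound_of_continuousOn
          hg.continuousOn
        apply hfi.bdd_mul (c := B)
        · exact (Complex.measurable_ofReal.comp hg.measurable).aestronglyMeasurable
        · filter_upwards [ae_restrict_mem measurableSet_Ioo] with s hs
          rw [Complex.norm_real]
          exact hB s (Set.Ioo_subset_Icc_self hs)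
      have hint_d : Integrable (fun x => (((g x - p.eval x : ℝ)) : ℂ) * f x) μ :=
        (hint_g.sub hint_p).congr (Filter.Eventually.of_forall fun x => by
          simp only [Pi.sub_apply]; push_cast; ring)
      have hsplit : I = (∫ x in Set.Ioo (-l) l, (((g x - p.eval x : ℝ)) : ℂ) * f x)
          + ∫ x in Set.Ioo (-l) l, ((p.eval x : ℝ) : ℂ) * f x := by
        rw [hI, ← integral_add hint_d hint_p]
        exact integral_congr_ae (Filter.Eventually.of_forall fun x => by push_cast; ring)
      rw [hsplit, hpoly p, add_zero]
      have hbound : ‖∫ x in Set.Ioo (-l) l, (((g x - p.eval x : ℝ)) : ℂ) * f x‖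
          ≤ ∫ x in Set.Ioo (-l) l, δ * ‖f x‖ := by
        apply norm_integral_le_of_norm_le (hfi.norm.const_mul δ)
        filter_upwards [ae_restrict_mem measurableSet_Ioo] with x hx
        rw [norm_mul, Complex.norm_real, Real.norm_eq_abs, abs_sub_comm]
        exact mul_le_mul_of_nonneg_right (le_of_lt (hp x (Set.Ioo_subset_Icc_self hx)))
          (norm_nonneg _)
      calc ‖∫ x in Set.Ioo (-l) l, (((g x - p.eval x : ℝ)) : ℂ) * f x‖
          ≤ ∫ x in Set.Ioo (-l) l, δ * ‖f x‖ := hbound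
        _ = δ * ∫ x in Set.Ioo (-l) l, ‖f x‖ := integral_const_mul _ _
        _ ≤ δ * C := by
            apply mul_le_mul_of_nonneg_left _ hδ0.le
            rw [hC]; linarith
        _ = ε := by rw [hδ]; field_simp
    have : ‖I‖ ≤ 0 := le_of_forall_pos_le_add fun ε hε => by
      simpa using hnorm ε hε
    rw [norm_le_zero_iff] at this
    exact this
  -- conclude f = 0 a.e. via smooth test functions on the indicator
  set g0 : ℝ → ℂ := (Set.Ioo (-l) l).indicator f with hg0def
  have hg0int : Integrable g0 volume := (integrable_indicator_iff measurableSet_Ioo).mpr hfi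
  have hg0 : ∀ᵐ x ∂(volume : Measure ℝ), g0 x = 0 := by
    apply ae_eq_zero_of_integral_contDiff_smul_eq_zero hg0int.locallyIntegrable
    intro g hgc hgs
    have heq : (fun x => g x • g0 x)
        = (Set.Ioo (-l) l).indicator (fun x => ((g x : ℝ) : ℂ) * f x) := by
      funext x
      by_cases hx : x ∈ Set.Ioo (-l) l
      · simp [hg0def, Set.indicator_of_mem hx, Complex.real_smul]
      · simp [hg0def, Set.indicator_of_notMem hx]
    rw [heq, integral_indicator measurableSet_Ioo]
    exact htest g hgc.continuous
  -- f agrees a.e. with g0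
  have hnull : (volume : Measure ℝ) ({-l, l} : Set ℝ) = 0 :=
    (((Set.finite_singleton l).insert (-l)).countable).measure_zero _
  have hae : ∀ᵐ x ∂(volume : Measure ℝ), x ∉ ({-l, l} : Set ℝ) :=
    measure_eq_zero_iff_ae_notMem.mp hnull
  filter_upwards [hsupp, hg0, hae] with x h1 h2 h3
  by_cases hx : x ∈ Set.Ioo (-l) l
  · have : g0 x = f x := Set.indicator_of_mem hx f
    rw [← this, h2]; rfl
  · have hxIcc : x ∉ Set.Icc (-l) l := by
      intro hcon
      rcases lt_or_eq_of_le hcon.1 with h | h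
      · rcases lt_or_eq_of_le hcon.2 with h' | h'
        · exact hx ⟨h, h'⟩
        · exact h3 (by simp [h'])
      · exact h3 (by simp [← h])
    rw [h1 hxIcc]; rfl
end

section
/- Let a : ℝ² × S¹ → ℝ be continuous with compact support, and define (T₁⁻¹ g)(x, θ) = ∫_{-∞}^{0} exp(-∫_s^0 a(x + tθ, θ) dt) g(x + sθ, θ) ds for g continuous with compact support in a bounded convex domain Ω (extended by zero). Then u = T₁⁻¹ g satisfies the transport equation θ·∇_x u(x, θ) + a(x, θ) u(x, θ) = g(x, θ) for x ∈ Ω along the direction θ. -/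
open MeasureTheory

/-- The attenuated line integral `u = T₁⁻¹ g` solves the transport equation
`θ·∇u + a u = g` along the direction `θ`: the derivative of `s ↦ u(x + sθ)` at `s = 0`
equals `g(x,θ) - a(x,θ) u(x,θ)` for `x ∈ Ω`. -/
theorem stmt_11 (Ω : Set (EuclideanSpace ℝ (Fin 2))) (hΩo : IsOpen Ω)
    (hΩc : Convex ℝ Ω) (hΩb : Bornology.IsBounded Ω)
    (a g : EuclideanSpace ℝ (Fin 2) → EuclideanSpace ℝ (Fin 2) → ℝ)
    (ha : Continuous fun p : EuclideanSpace ℝ (Fin 2) × EuclideanSpace ℝ (Fin 2) => a p.1 p.2)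
    (haC : HasCompactSupport fun p : EuclideanSpace ℝ (Fin 2) × EuclideanSpace ℝ (Fin 2) =>
      a p.1 p.2)
    (hg : Continuous fun p : EuclideanSpace ℝ (Fin 2) × EuclideanSpace ℝ (Fin 2) => g p.1 p.2)
    (hgsupp : ∀ y θ', y ∉ Ω → g y θ' = 0)
    (θ : EuclideanSpace ℝ (Fin 2)) (hθ : ‖θ‖ = 1)
    (u : EuclideanSpace ℝ (Fin 2) → ℝ)
    (hu : ∀ y, u y = ∫ s in Set.Iic (0 : ℝ),
      Real.exp (-(∫ t in Set.Ioc s (0 : ℝ), a (y + t • θ) θ)) * g (y + s • θ) θ) :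
    ∀ x ∈ Ω, HasDerivAt (fun s : ℝ => u (x + s • θ)) (g x θ - a x θ * u x) 0 := by
  intro x hx
  set φ : ℝ → ℝ := fun t => a (x + t • θ) θ with hφdef
  set ψ : ℝ → ℝ := fun t => g (x + t • θ) θ with hψdef
  have hline : Continuous fun t : ℝ =>
      ((x + t • θ, θ) : EuclideanSpace ℝ (Fin 2) × EuclideanSpace ℝ (Fin 2)) := by
    fun_prop
  have hφc : Continuous φ := ha.comp hline
  have hψc : Continuous ψ := hg.comp hline
  obtain ⟨R, hR⟩ := hΩb.subset_closedBall 0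
  have hψsupp : HasCompactSupport ψ := by
    apply HasCompactSupport.of_support_subset_isCompact
      (isCompact_Icc (a := -(R + ‖x‖)) (b := R + ‖x‖))
    intro t ht
    rw [Set.mem_Icc, ← abs_le]
    by_contra hcon
    refine ht (hgsupp _ _ fun hmem => hcon ?_)
    have h1 := hR hmem
    rw [Metric.mem_closedBall, dist_zero_right] at h1
    calc |t| = ‖t • θ‖ := by rw [norm_smul, hθ, mul_one, Real.norm_eq_abs]
      _ = ‖x + t • θ - x‖ := by rw [add_sub_cancel_left]
      _ ≤ ‖x + t • θ‖ + ‖x‖ := norm_sub_le _ _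
      _ ≤ R + ‖x‖ := by linarith
  set D : ℝ → ℝ := fun s => ∫ t in (0:ℝ)..s, φ t with hD
  have hDderiv : ∀ s : ℝ, HasDerivAt D (φ s) s := fun s =>
    (hφc.integral_hasStrictDerivAt 0 s).hasDerivAt
  have hDc : Continuous D := by
    have : Differentiable ℝ D := fun s => (hDderiv s).differentiableAt
    exact this.continuous
  set k : ℝ → ℝ := fun p => Real.exp (D p) * ψ p with hk
  have hkc : Continuous k := (Real.continuous_exp.comp hDc).mul hψc
  have hksupp : HasCompactSupport k := hψsupp.mul_left
  have hkint : Integrable k := hkc.integrable_of_hasCompactSupport hksupp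
  set H : ℝ → ℝ := fun s => ∫ p in Set.Iic s, k p with hH
  -- key identity : u (x + s θ) = exp (-D s) * H s
  have key : ∀ s : ℝ, u (x + s • θ) = Real.exp (-(D s)) * H s := by
    intro s
    rw [hu]
    have step1 : Set.EqOn
        (fun r : ℝ => Real.exp (-(∫ t in Set.Ioc r (0:ℝ), a (x + s • θ + t • θ) θ)) *
          g (x + s • θ + r • θ) θ)
        (fun r : ℝ => Real.exp (-(D s)) * k (r + s)) (Set.Iic 0) := by
      intro r hr
      have hr0 : r ≤ (0:ℝ) := hr
      have e1 : ∀ t : ℝ, x + s • θ + t • θ = x + (s + t) • θ := by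
        intro t; rw [add_smul, add_assoc]
      have inner : (∫ t in Set.Ioc r (0:ℝ), a (x + s • θ + t • θ) θ)
          = D s - D (r + s) := by
        rw [← intervalIntegral.integral_of_le hr0]
        have : (∫ t in r..(0:ℝ), a (x + s • θ + t • θ) θ) = ∫ t in r..(0:ℝ), φ (s + t) := by
          congr 1; ext t; rw [e1]
        rw [this, intervalIntegral.integral_comp_add_left φ s]
        have hsplit : (∫ t in (s + r)..(s + 0), φ t)
            = (∫ t in (s + r)..(0:ℝ), φ t) + ∫ t in (0:ℝ)..(s + 0), φ t :=
          (intervalIntegral.integral_add_adjacent_intervals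
            (hφc.intervalIntegrable _ _) (hφc.intervalIntegrable _ _)).symm
        rw [hsplit, intervalIntegral.integral_symm]
        simp only [hD, add_zero, add_comm r s]
        ring
      simp only [hk]
      rw [inner, e1 r]
      rw [show -(D s - D (r + s)) = -(D s) + D (r + s) by ring, Real.exp_add]
      have hψeq : ψ (r + s) = g (x + (s + r) • θ) θ := by
        rw [hψdef]; simp [add_comm r s]
      rw [hψeq]
      ring
    rw [setIntegral_congr_fun measurableSet_Iic step1, integral_const_mul]
    congr 1
    have hpre : (fun r : ℝ => r + s) ⁻¹' Set.Iic s = Set.Iic 0 := by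
      ext r
      simp [Set.mem_Iic]
    have := (measurePreserving_add_right volume s).setIntegral_preimage_emb
      (measurableEmbedding_addRight s) k (Set.Iic s)
    rw [hpre] at this
    exact this
  -- the function equals exp(-D s) * H s
  have hfun : (fun s : ℝ => u (x + s • θ)) = fun s => Real.exp (-(D s)) * H s :=
    funext key
  rw [hfun]
  -- H s = H 0 + ∫ 0..s k
  have hHfun : H = fun s => H 0 + ∫ p in (0:ℝ)..s, k p := by
    funext s
    have := intervalIntegral.integral_Iic_sub_Iic (μ := volume) (f := k) (a := (0:ℝ)) (b := s)
      hkint.integrableOn hkint.integrableOn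
    simp only [hH] at this ⊢
    linarith
  have hD0 : D 0 = 0 := by simp [hD]
  have hux : u x = H 0 := by
    have := key 0
    simpa [hD0] using this
  have hexpD : HasDerivAt (fun s => Real.exp (-(D s))) (-(φ 0)) 0 := by
    have h1 : HasDerivAt (fun s => -(D s)) (-(φ 0)) 0 := (hDderiv 0).neg
    have := h1.exp
    simpa [hD0] using this
  have hHderiv : HasDerivAt H (ψ 0) 0 := by
    rw [hHfun]
    have h2 : HasDerivAt (fun s => ∫ p in (0:ℝ)..s, k p) (k 0) 0 :=
      (hkc.integral_hasStrictDerivAt 0 0).hasDerivAt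
    have := h2.const_add (H 0)
    simpa [hk, hD0] using this
  have := hexpD.mul hHderiv
  have hfin : -(φ 0) * H 0 + Real.exp (-(D 0)) * ψ 0 = g x θ - a x θ * u x := by
    simp only [hD0, neg_zero, Real.exp_zero, one_mul, hux, hφdef, hψdef]
    simp only [zero_smul, add_zero]
    ring
  rw [← hfin]
  exact this
end

section
/- Let X be a Banach space and K : X → X a bounded operator such that K² is compact. If I - λ₀K is invertible for some λ₀ (e.g., |λ₀| small), then the set of λ ∈ ℂ for which I - λK fails to be invertible is discrete in ℂ; in particular, either I - K is invertible, or there exists ε > 0 such that I - λK is invertible for all λ with 0 < |λ - 1| < ε. -/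
open Metric Set Filter Topology

set_option linter.unusedSectionVars false
set_option maxHeartbeats 1000000

section Stmt19Aux
variable {X : Type*} [NormedAddCommGroup X] [NormedSpace ℂ X] [CompleteSpace X]

lemma stmt19_riesz (F : Submodule ℂ X) (hF : IsClosed (F : Set X)) {x : X} (hx : x ∉ F) :
    ∃ z : X, ‖z‖ = 1 ∧ (∀ y ∈ F, (1:ℝ)/2 ≤ ‖z - y‖) ∧
      ∃ (a : ℂ) (w : X), w ∈ F ∧ z = a • (x - w) := by
  have hne : (F : Set X).Nonempty := ⟨0, F.zero_mem⟩
  have hd : 0 < infDist x (F : Set X) := (hF.notMem_iff_infDist_pos hne).1 hx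
  obtain ⟨w, hwF, hw⟩ := (infDist_lt_iff hne).1
    (show infDist x (F : Set X) < 2 * infDist x (F : Set X) by linarith)
  have htpos : 0 < ‖x - w‖ := by
    rw [norm_pos_iff, sub_ne_zero]
    rintro rfl; exact hx hwF
  set t : ℝ := ‖x - w‖ with ht
  refine ⟨((t : ℂ))⁻¹ • (x - w), ?_, ?_, ((t : ℂ))⁻¹, w, hwF, rfl⟩
  · rw [norm_smul, norm_inv, Complex.norm_real, Real.norm_of_nonneg htpos.le]
    exact inv_mul_cancel₀ htpos.ne'
  · intro y hy
    have hmem : w + (t : ℂ) • y ∈ (F : Set X) := F.add_mem hwF (F.smul_mem _ hy)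
    have h1 : infDist x (F : Set X) ≤ ‖x - (w + (t : ℂ) • y)‖ := by
      rw [← dist_eq_norm]
      exact infDist_le_dist_of_mem hmem
    have heq : (t : ℂ)⁻¹ • (x - w) - y = (t : ℂ)⁻¹ • (x - (w + (t : ℂ) • y)) := by
      have htne : (t : ℂ) ≠ 0 := by
        simpa using htpos.ne'
      rw [smul_sub, smul_sub, smul_add, smul_smul, inv_mul_cancel₀ htne, one_smul]
      abel
    rw [heq, norm_smul, norm_inv, Complex.norm_real, Real.norm_of_nonneg htpos.le]
    have hdist : dist x w < 2 * infDist x (F : Set X) := hw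
    rw [dist_eq_norm] at hdist
    rw [le_inv_mul_iff₀ htpos]
    linarith

lemma stmt19_unit_sq {A : Type*} [Ring A] {a : A} (h : IsUnit (1 - a * a)) : IsUnit (1 - a) := by
  obtain ⟨u, hu⟩ := h
  have hca : Commute a (↑u : A) := by
    rw [hu]
    exact ((Commute.one_right a).sub_right ((Commute.refl a).mul_right (Commute.refl a)))
  have hcainv : Commute a (↑u⁻¹ : A) := hca.units_inv_right
  have hL : (↑u⁻¹ * (1 + a)) * (1 - a) = 1 := by
    have h1 : (1 + a) * (1 - a) = 1 - a * a := by noncomm_ring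
    rw [mul_assoc, h1, ← hu, Units.inv_mul]
  have hR : (1 - a) * ((1 + a) * ↑u⁻¹) = 1 := by
    have h1 : (1 - a) * (1 + a) = 1 - a * a := by noncomm_ring
    rw [← mul_assoc, h1, ← hu, Units.mul_inv]
  have heq : (1 + a) * (↑u⁻¹ : A) = ↑u⁻¹ * (1 + a) := by
    have : Commute (1 + a) (↑u⁻¹ : A) := (Commute.one_left _).add_left hcainv
    exact this
  refine ⟨⟨1 - a, ↑u⁻¹ * (1 + a), ?_, hL⟩, rfl⟩
  rw [← heq]; exact hR


lemma stmt19_fredholm (C : X →L[ℂ] X) (hC : IsCompactOperator ⇑C)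
    (hinj : Function.Injective ⇑((1 : X →L[ℂ] X) - C)) :
    IsUnit ((1 : X →L[ℂ] X) - C) := by
  classical
  set T : X →L[ℂ] X := (1 : X →L[ℂ] X) - C with hTdef
  obtain ⟨M, hMc, hM⟩ := hC.image_closedBall_subset_compact 1
  -- Step 1: T is bounded below
  have hbdd : ∃ c : ℝ, 0 < c ∧ ∀ x, c * ‖x‖ ≤ ‖T x‖ := by
    by_contra hcon
    push_neg at hcon
    have hseq : ∀ n : ℕ, ∃ u : X, ‖u‖ = 1 ∧ ‖T u‖ < 1 / (n + 1) := by
      intro n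
      obtain ⟨x, hx⟩ := hcon (1 / (n + 1)) (by positivity)
      have hx0 : x ≠ 0 := by
        rintro rfl
        simp at hx
      have hnx : (0:ℝ) < ‖x‖ := norm_pos_iff.2 hx0
      refine ⟨((‖x‖ : ℂ))⁻¹ • x, ?_, ?_⟩
      · rw [norm_smul, norm_inv, Complex.norm_real, Real.norm_of_nonneg hnx.le]
        exact inv_mul_cancel₀ hnx.ne'
      · rw [map_smul, norm_smul, norm_inv, Complex.norm_real, Real.norm_of_nonneg hnx.le]
        rw [inv_mul_lt_iff₀ hnx]
        linarith [hx]
    choose u hu1 hu2 using hseq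
    have humem : ∀ n, C (u n) ∈ M := fun n =>
      hM ⟨u n, by simp [Metric.mem_closedBall, dist_eq_norm, hu1 n], rfl⟩
    obtain ⟨y, _, φ, hφ, htends⟩ := hMc.tendsto_subseq humem
    have hTu0 : Tendsto (fun k => T (u (φ k))) atTop (𝓝 0) := by
      apply squeeze_zero_norm (fun k => (hu2 (φ k)).le.trans ?_) tendsto_one_div_add_atTop_nhds_zero_nat
      gcongr
      exact_mod_cast (hφ.id_le k)
    have huy : Tendsto (fun k => u (φ k)) atTop (𝓝 y) := by
      have : (fun k => u (φ k)) = fun k => T (u (φ k)) + C (u (φ k)) := by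
        funext k
        simp [hTdef]
      rw [this]
      simpa using hTu0.add htends
    have hTy : T y = 0 := by
      have h1 : Tendsto (fun k => T (u (φ k))) atTop (𝓝 (T y)) :=
        (T.continuous.tendsto y).comp huy
      exact tendsto_nhds_unique h1 hTu0
    have hy0 : y = 0 := hinj (by simpa using hTy)
    have : Tendsto (fun k => ‖u (φ k)‖) atTop (𝓝 ‖y‖) := (continuous_norm.tendsto y).comp huy
    simp only [hu1, hy0, norm_zero] at this
    exact absurd (tendsto_nhds_unique this tendsto_const_nhds) zero_ne_one
  obtain ⟨c, hc, hlow⟩ := hbdd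
  -- bounds for powers
  have hlown : ∀ n : ℕ, ∀ x, c ^ n * ‖x‖ ≤ ‖(T ^ n) x‖ := by
    intro n
    induction n with
    | zero => intro x; simp
    | succ n ih =>
      intro x
      have h1 : (T ^ (n + 1)) x = (T ^ n) (T x) := by
        rw [pow_succ]; rfl
      rw [h1, pow_succ, mul_assoc]
      calc c ^ n * (c * ‖x‖) ≤ c ^ n * ‖T x‖ := by
            exact mul_le_mul_of_nonneg_left (hlow x) (by positivity)
        _ ≤ ‖(T ^ n) (T x)‖ := ih (T x)
  have hinjn : ∀ n : ℕ, Function.Injective ⇑(T ^ n) := by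
    intro n a b hab
    have h1 : c ^ n * ‖a - b‖ ≤ ‖(T ^ n) (a - b)‖ := hlown n _
    rw [map_sub, hab, sub_self, norm_zero] at h1
    have : ‖a - b‖ ≤ 0 := by
      have hcn : (0:ℝ) < c ^ n := by positivity
      nlinarith [norm_nonneg (a - b)]
    rwa [← sub_eq_zero, ← norm_le_zero_iff]
  have hclosedn : ∀ n : ℕ, IsClosed ((LinearMap.range ((T ^ n : X →L[ℂ] X) : X →ₗ[ℂ] X) : Submodule ℂ X) : Set X) := by
    intro n
    have halip : AntilipschitzWith ⟨(c ^ n)⁻¹, by positivity⟩ ⇑(T ^ n) := by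
      apply ContinuousLinearMap.antilipschitz_of_bound
      intro x
      have := hlown n x
      show ‖x‖ ≤ (c ^ n)⁻¹ * ‖(T ^ n) x‖
      rw [le_inv_mul_iff₀ (by positivity : (0:ℝ) < c ^ n)]
      exact this
    have := halip.isClosed_range (T ^ n).uniformContinuous
    rw [LinearMap.coe_range]; exact this
  -- Step 2: T is surjective
  have hsurj : Function.Surjective ⇑T := by
    by_contra hsur
    simp only [Function.Surjective, not_forall] at hsur
    obtain ⟨v, hv⟩ := hsur
    push_neg at hv
    set R : ℕ → Submodule ℂ X := fun n => LinearMap.range ((T ^ n : X →L[ℂ] X) : X →ₗ[ℂ] X) with hRdef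
    have hRsucc : ∀ n, R (n + 1) ≤ R n := by
      intro n x hx
      obtain ⟨u, rfl⟩ := hx
      rw [pow_succ]
      exact ⟨T u, rfl⟩
    have hRanti : ∀ m n, m ≤ n → R n ≤ R m := fun m n h =>
      antitone_nat_of_succ_le hRsucc h
    have hvmem : ∀ n, (T ^ n) v ∈ R n := fun n => ⟨v, rfl⟩
    have hvnotmem : ∀ n, (T ^ n) v ∉ R (n + 1) := by
      intro n hmem
      obtain ⟨u, hu⟩ := hmem
      have : (T ^ n) (T u) = (T ^ n) v := by
        rw [← hu, pow_succ]; rfl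
      exact hv u (hinjn n this)
    have hTmap : ∀ n, ∀ x ∈ R n, T x ∈ R (n + 1) := by
      intro n x hx
      obtain ⟨u, rfl⟩ := hx
      refine ⟨u, ?_⟩
      rw [pow_succ']
      rfl
    have hz : ∀ n : ℕ, ∃ z : X, ‖z‖ = 1 ∧ z ∈ R n ∧ ∀ y ∈ R (n + 1), (1:ℝ)/2 ≤ ‖z - y‖ := by
      intro n
      obtain ⟨z, hz1, hz2, a, w, hwmem, hzeq⟩ :=
        stmt19_riesz (R (n + 1)) (hclosedn (n + 1)) (hvnotmem n)
      exact ⟨z, hz1, hzeq ▸ Submodule.smul_mem _ _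
        (Submodule.sub_mem _ (hvmem n) (hRsucc n hwmem)), hz2⟩
    choose z hz1 hz2 hz3 using hz
    have hsep : ∀ m n : ℕ, m < n → (1:ℝ)/2 ≤ ‖C (z m) - C (z n)‖ := by
      intro m n hmn
      have hCz : ∀ w : X, C w = w - T w := by
        intro w
        simp [hTdef]
      have hmem : T (z m) + (z n - T (z n)) ∈ R (m + 1) := by
        refine Submodule.add_mem _ (hTmap m _ (hz2 m)) (Submodule.sub_mem _ ?_ ?_)
        · exact hRanti (m + 1) n hmn (hz2 n)
        · exact hRanti (m + 1) (n + 1) (Nat.succ_le_succ hmn.le) (hTmap n _ (hz2 n))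
      have heq : C (z m) - C (z n) = z m - (T (z m) + (z n - T (z n))) := by
        rw [hCz, hCz]; abel
      rw [heq]
      exact hz3 m _ hmem
    have hzmem : ∀ n, C (z n) ∈ M := fun n =>
      hM ⟨z n, by simp [Metric.mem_closedBall, dist_eq_norm, hz1 n], rfl⟩
    obtain ⟨y, _, φ, hφ, htends⟩ := hMc.tendsto_subseq hzmem
    have hcauchy := htends.cauchySeq
    rw [Metric.cauchySeq_iff] at hcauchy
    obtain ⟨N, hN⟩ := hcauchy (1/4) (by norm_num)
    have h1 := hN (N + 1) (Nat.le_succ N) N le_rfl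
    have h2 := hsep (φ N) (φ (N + 1)) (hφ (Nat.lt_succ_self N))
    rw [dist_eq_norm] at h1
    have h3 : ‖C (z (φ N)) - C (z (φ (N + 1)))‖ < 1/4 := by
      rw [norm_sub_rev]
      simpa using h1
    linarith
  -- conclusion
  have hker : LinearMap.ker (T : X →ₗ[ℂ] X) = ⊥ := LinearMap.ker_eq_bot.2 hinj
  have hrange : LinearMap.range (T : X →ₗ[ℂ] X) = ⊤ := LinearMap.range_eq_top.2 hsurj
  let e := ContinuousLinearEquiv.ofBijective T hker hrange
  refine ⟨⟨T, e.symm.toContinuousLinearMap, ?_, ?_⟩, rfl⟩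
  · ext x
    exact ContinuousLinearEquiv.ofBijective_apply_symm_apply T hker hrange x
  · ext x
    exact ContinuousLinearEquiv.ofBijective_symm_apply_apply T hker hrange x


lemma stmt19_key (K : X →L[ℂ] X) (hK2 : IsCompactOperator ⇑(K ∘L K)) (lam₁ : ℂ)
    (h₁ : ¬ IsUnit ((1 : X →L[ℂ] X) - lam₁ • K)) :
    ∃ ε > (0:ℝ), ∀ lam : ℂ, lam ≠ lam₁ → ‖lam - lam₁‖ < ε →
      IsUnit ((1 : X →L[ℂ] X) - lam • K) := by
  classical
  have hl1 : lam₁ ≠ 0 := by rintro rfl; exact h₁ (by simp)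
  have hlp : (0:ℝ) < ‖lam₁‖ := norm_pos_iff.2 hl1
  by_contra hcon
  push_neg at hcon
  have H : ∀ r : ℝ, 0 < r → ∃ zz : ℂ, zz ≠ lam₁ ∧ ‖zz - lam₁‖ < min r (‖lam₁‖ / 2) ∧
      ¬ IsUnit ((1 : X →L[ℂ] X) - zz • K) := by
    intro r hr
    obtain ⟨lam, h1, h2, h3⟩ := hcon (min r (‖lam₁‖ / 2)) (lt_min hr (by positivity))
    exact ⟨lam, h1, h2, h3⟩
  choose! f hf1 hf2 hf3 using H
  set a : ℕ → ℂ := fun n => Nat.rec (f (‖lam₁‖ / 2)) (fun _ prev => f ‖prev - lam₁‖) n with ha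
  have hprop : ∀ n, a n ≠ lam₁ ∧ ‖a n - lam₁‖ < ‖lam₁‖ / 2 ∧
      ¬ IsUnit ((1 : X →L[ℂ] X) - a n • K) := by
    intro n
    induction n with
    | zero =>
      have hpos : (0:ℝ) < ‖lam₁‖ / 2 := by positivity
      exact ⟨hf1 _ hpos, lt_of_lt_of_le (hf2 _ hpos) (min_le_right _ _), hf3 _ hpos⟩
    | succ n ih =>
      have hrpos : 0 < ‖a n - lam₁‖ := norm_pos_iff.2 (sub_ne_zero.2 ih.1)
      exact ⟨hf1 _ hrpos, lt_of_lt_of_le (hf2 _ hrpos)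
        ((min_le_left _ _).trans ih.2.1.le), hf3 _ hrpos⟩
  have hdec : ∀ n, ‖a (n + 1) - lam₁‖ < ‖a n - lam₁‖ := by
    intro n
    have hrpos : 0 < ‖a n - lam₁‖ := norm_pos_iff.2 (sub_ne_zero.2 (hprop n).1)
    exact lt_of_lt_of_le (hf2 _ hrpos) (min_le_left _ _)
  have hanti : StrictAnti fun n => ‖a n - lam₁‖ := strictAnti_nat_of_succ_lt hdec
  have hainj : Function.Injective a := fun m n hmn => hanti.injective (by simp [hmn])
  have hsq : Function.Injective (fun n => (a n) ^ 2) := by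
    intro m n h
    simp only at h
    have hsum : a m + a n ≠ 0 := by
      intro h0
      have hb := (hprop m).2.1
      have hc := (hprop n).2.1
      have e1 : a m + a n = 2 * lam₁ + ((a m - lam₁) + (a n - lam₁)) := by ring
      have e2 : ‖(2:ℂ) * lam₁‖ = 2 * ‖lam₁‖ := by
        rw [norm_mul]; norm_num
      have e3 := norm_sub_norm_le ((2:ℂ) * lam₁) (a m + a n)
      rw [e2] at e3
      have e5 : ‖(2:ℂ) * lam₁ - (a m + a n)‖ ≤ ‖a m - lam₁‖ + ‖a n - lam₁‖ := by
        have e6 : (2:ℂ) * lam₁ - (a m + a n) = -((a m - lam₁) + (a n - lam₁)) := by ring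
        rw [e6, norm_neg]
        exact norm_add_le _ _
      have hfin : (0:ℝ) < ‖a m + a n‖ := by linarith
      rw [h0, norm_zero] at hfin
      exact lt_irrefl _ hfin
    have hfac : (a m - a n) * (a m + a n) = 0 := by
      have : (a m - a n) * (a m + a n) = (a m) ^ 2 - (a n) ^ 2 := by ring
      rw [this, h, sub_self]
    rcases mul_eq_zero.1 hfac with h1 | h1
    · exact hainj (sub_eq_zero.1 h1)
    · exact absurd h1 hsum
  set ν : ℕ → ℂ := fun n => ((a n) ^ 2)⁻¹ with hν
  have hν_inj : Function.Injective ν := fun m n h => hsq (inv_injective h)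
  have hane : ∀ n, a n ≠ 0 := by
    intro n h0
    have := (hprop n).2.1
    rw [h0, zero_sub, norm_neg] at this
    linarith
  have hνne : ∀ n, ν n ≠ 0 := fun n => inv_ne_zero (pow_ne_zero 2 (hane n))
  have heig : ∀ n, ∃ xx : X, xx ≠ 0 ∧ (K ∘L K) xx = ν n • xx := by
    intro n
    have hnotunit : ¬ IsUnit ((1 : X →L[ℂ] X) - ((a n) ^ 2) • (K ∘L K)) := by
      intro hu
      apply (hprop n).2.2
      apply stmt19_unit_sq
      have heq : (a n • K) * (a n • K) = ((a n) ^ 2) • (K ∘L K) := by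
        rw [smul_mul_smul_comm, ← pow_two]
        rfl
      rwa [heq]
    have hCc : IsCompactOperator ⇑(((a n) ^ 2) • (K ∘L K)) := by
      have := hK2.smul ((a n) ^ 2)
      simpa using this
    have hninj : ¬ Function.Injective ⇑((1 : X →L[ℂ] X) - ((a n) ^ 2) • (K ∘L K)) :=
      fun hinj => hnotunit (stmt19_fredholm _ hCc hinj)
    rw [Function.not_injective_iff] at hninj
    obtain ⟨p, q, hpq, hne⟩ := hninj
    refine ⟨p - q, sub_ne_zero.2 hne, ?_⟩
    have h1 : p - ((a n) ^ 2) • (K ∘L K) p = q - ((a n) ^ 2) • (K ∘L K) q := by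
      simpa [ContinuousLinearMap.sub_apply, ContinuousLinearMap.smul_apply] using hpq
    have h2 : (K ∘L K) (p - q) = ν n • (p - q) := by
      have h3 : ((a n) ^ 2) • (K ∘L K) (p - q) = p - q := by
        rw [map_sub, smul_sub]
        exact (sub_eq_sub_iff_sub_eq_sub.1 h1).symm
      calc (K ∘L K) (p - q) = ν n • (((a n) ^ 2) • (K ∘L K) (p - q)) := by
            rw [hν]
            rw [smul_smul, inv_mul_cancel₀ (pow_ne_zero 2 (hane n)), one_smul]
        _ = ν n • (p - q) := by rw [h3]
    exact h2
  choose x hx0 hxeig using heig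
  have hLI : LinearIndependent ℂ x := by
    apply Module.End.eigenvectors_linearIndependent' ((K ∘L K : X →L[ℂ] X) : X →ₗ[ℂ] X) ν hν_inj
    intro i
    refine ⟨?_, hx0 i⟩
    rw [Module.End.mem_eigenspace_iff]
    simpa using hxeig i
  set Y : ℕ → Submodule ℂ X := fun n => Submodule.span ℂ (x '' Set.Iic n) with hY
  have hYmono : ∀ m n : ℕ, m ≤ n → Y m ≤ Y n := fun m n h =>
    Submodule.span_mono (Set.image_mono (Set.Iic_subset_Iic.2 (by exact_mod_cast h)))
  have hxmem : ∀ i n : ℕ, i ≤ n → x i ∈ Y n := fun i n h =>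
    Submodule.subset_span ⟨i, h, rfl⟩
  have hYclosed : ∀ n, IsClosed ((Y n : Submodule ℂ X) : Set X) := by
    intro n
    have : FiniteDimensional ℂ (Y n) :=
      FiniteDimensional.span_of_finite ℂ ((Set.finite_Iic n).image x)
    exact Submodule.closed_of_finiteDimensional _
  have hxnot : ∀ n, x (n + 1) ∉ Y n := by
    intro n
    apply hLI.notMem_span_image
    simp
  have hKKmap : ∀ n : ℕ, ∀ v ∈ Y n, (K ∘L K) v ∈ Y n := by
    intro n
    have hle : Y n ≤ Submodule.comap ((K ∘L K : X →L[ℂ] X) : X →ₗ[ℂ] X) (Y n) := by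
      apply Submodule.span_le.2
      rintro _ ⟨i, hi, rfl⟩
      simp only [SetLike.mem_coe, Submodule.mem_comap, ContinuousLinearMap.coe_coe]
      rw [hxeig i]
      exact Submodule.smul_mem _ _ (hxmem i n hi)
    intro v hv
    exact hle hv
  have hsubmap : ∀ n : ℕ, ∀ v ∈ Y (n + 1), (K ∘L K) v - ν (n + 1) • v ∈ Y n := by
    intro n
    have hle : Y (n + 1) ≤ Submodule.comap
        (((K ∘L K : X →L[ℂ] X) : X →ₗ[ℂ] X) - ν (n + 1) • LinearMap.id) (Y n) := by
      apply Submodule.span_le.2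
      rintro _ ⟨i, hi, rfl⟩
      simp only [SetLike.mem_coe, Submodule.mem_comap, LinearMap.sub_apply,
        LinearMap.smul_apply, LinearMap.id_apply, ContinuousLinearMap.coe_coe]
      rw [hxeig i, ← sub_smul]
      have hi' : i ≤ n + 1 := hi
      rcases Nat.lt_succ_iff_lt_or_eq.1 (Nat.lt_succ_of_le hi') with h | h
      · exact Submodule.smul_mem _ _ (hxmem i n (Nat.lt_succ_iff.1 h))
      · rw [h]
        simp
    intro v hv
    have := hle hv
    simpa using this
  have hz : ∀ n : ℕ, ∃ z : X, ‖z‖ = 1 ∧ z ∈ Y (n + 1) ∧ ∀ y ∈ Y n, (1:ℝ)/2 ≤ ‖z - y‖ := by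
    intro n
    obtain ⟨z, hz1, hz2, b, w, hwmem, hzeq⟩ := stmt19_riesz (Y n) (hYclosed n) (hxnot n)
    refine ⟨z, hz1, ?_, hz2⟩
    rw [hzeq]
    exact Submodule.smul_mem _ _ (Submodule.sub_mem _ (hxmem (n + 1) (n + 1) le_rfl)
      (hYmono n (n + 1) (Nat.le_succ n) hwmem))
  choose z hz1 hz2 hz3 using hz
  set δ : ℝ := (4 * ‖lam₁‖ ^ 2)⁻¹ with hδ
  have hδpos : 0 < δ := by positivity
  have hνlow : ∀ n, δ ≤ ‖ν n‖ := by
    intro n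
    have h2 : ‖a n‖ ≤ 2 * ‖lam₁‖ := by
      have hb := (hprop n).2.1
      have := norm_sub_norm_le (a n) lam₁
      linarith
    have hp : (0:ℝ) < ‖(a n) ^ 2‖ := norm_pos_iff.2 (pow_ne_zero 2 (hane n))
    have h3 : ‖(a n) ^ 2‖ ≤ 4 * ‖lam₁‖ ^ 2 := by
      rw [norm_pow]
      nlinarith [norm_nonneg (a n)]
    have : ‖ν n‖ = ‖(a n) ^ 2‖⁻¹ := norm_inv _
    rw [this, hδ]
    exact inv_anti₀ hp h3
  have hsep : ∀ m n : ℕ, m < n → δ / 2 ≤ ‖(K ∘L K) (z n) - (K ∘L K) (z m)‖ := by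
    intro m n hmn
    have hw1 : (K ∘L K) (z n) - ν (n + 1) • z n ∈ Y n := hsubmap n _ (hz2 n)
    have hw2 : (K ∘L K) (z m) ∈ Y n := hYmono (m + 1) n hmn (hKKmap (m + 1) _ (hz2 m))
    set w : X := ((K ∘L K) (z n) - ν (n + 1) • z n) - (K ∘L K) (z m) with hwdef
    have hwY : w ∈ Y n := Submodule.sub_mem _ hw1 hw2
    have heq : (K ∘L K) (z n) - (K ∘L K) (z m) =
        ν (n + 1) • (z n - (-((ν (n + 1))⁻¹ • w))) := by
      rw [smul_sub, smul_neg, smul_smul, mul_inv_cancel₀ (hνne (n + 1)), one_smul, hwdef]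
      abel
    rw [heq, norm_smul]
    have hin : -((ν (n + 1))⁻¹ • w) ∈ Y n := Submodule.neg_mem _ (Submodule.smul_mem _ _ hwY)
    have hge := hz3 n _ hin
    have hν1 := hνlow (n + 1)
    calc δ / 2 ≤ ‖ν (n + 1)‖ * (1 / 2) := by linarith
      _ ≤ ‖ν (n + 1)‖ * ‖z n - -((ν (n + 1))⁻¹ • w)‖ :=
        mul_le_mul_of_nonneg_left hge (norm_nonneg _)
  obtain ⟨MM, hMc, hM⟩ := hK2.image_closedBall_subset_compact 1
  have hzmem : ∀ n, (K ∘L K) (z n) ∈ MM := fun n =>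
    hM ⟨z n, by simp [Metric.mem_closedBall, dist_eq_norm, hz1 n], rfl⟩
  obtain ⟨y, _, φ, hφ, htends⟩ := hMc.tendsto_subseq hzmem
  have hcauchy := htends.cauchySeq
  rw [Metric.cauchySeq_iff] at hcauchy
  obtain ⟨N, hN⟩ := hcauchy (δ / 2) (by positivity)
  have h1 := hN (N + 1) (Nat.le_succ N) N le_rfl
  have h2 := hsep (φ N) (φ (N + 1)) (hφ (Nat.lt_succ_self N))
  simp only [Function.comp_apply, dist_eq_norm] at h1
  linarith

end Stmt19Aux

/-- Meromorphic Fredholm alternative: if `K` is a bounded operator on a Banach space `X`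
with `K²` compact, and `I - λ₀K` is invertible for some `λ₀`, then the set of `λ ∈ ℂ`
where `I - λK` fails to be invertible is discrete; in particular either `I - K` is
invertible or `I - λK` is invertible for all `λ` in a punctured neighborhood of `1`. -/
theorem stmt_19 (X : Type*) [NormedAddCommGroup X] [NormedSpace ℂ X] [CompleteSpace X]
    (K : X →L[ℂ] X) (hK2 : IsCompactOperator ⇑(K ∘L K))
    (h0 : ∃ lam₀ : ℂ, IsUnit ((1 : X →L[ℂ] X) - lam₀ • K)) :
    DiscreteTopology {lam : ℂ // ¬ IsUnit ((1 : X →L[ℂ] X) - lam • K)} ∧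
      (IsUnit ((1 : X →L[ℂ] X) - K) ∨
        ∃ ε > (0 : ℝ), ∀ lam : ℂ, 0 < ‖lam - 1‖ → ‖lam - 1‖ < ε →
          IsUnit ((1 : X →L[ℂ] X) - lam • K)) := by
  constructor
  · rw [discreteTopology_iff_isOpen_singleton]
    rintro ⟨lam₁, h₁⟩
    obtain ⟨ε, hε, hkey⟩ := stmt19_key K hK2 lam₁ h₁
    have hset : {(⟨lam₁, h₁⟩ : {lam : ℂ // ¬ IsUnit ((1 : X →L[ℂ] X) - lam • K)})} =
        Subtype.val ⁻¹' Metric.ball lam₁ ε := by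
      ext ⟨b, hb⟩
      simp only [Set.mem_singleton_iff, Set.mem_preimage, Metric.mem_ball, Subtype.mk.injEq]
      constructor
      · rintro rfl
        simpa [dist_self] using hε
      · intro hdist
        by_contra hne
        exact hb (hkey b hne (by rwa [← dist_eq_norm]))
    rw [hset]
    exact Metric.isOpen_ball.preimage continuous_subtype_val
  · by_cases h1 : IsUnit ((1 : X →L[ℂ] X) - K)
    · exact Or.inl h1
    · right
      have h1' : ¬ IsUnit ((1 : X →L[ℂ] X) - (1 : ℂ) • K) := by rwa [one_smul]
      obtain ⟨ε, hε, hkey⟩ := stmt19_key K hK2 1 h1'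
      refine ⟨ε, hε, fun lam hl hle => hkey lam ?_ hle⟩
      exact sub_ne_zero.1 (norm_pos_iff.1 hl)
end
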